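/- Let P = {x : Hᵀx ≤ 𝟙} be a polytope with 0 in its interior, A a nonnegative K*-map such that Inn_P(A) is closed and has nonempty interior. Then the polar of Inn_P(A) equals Out_{P°}(A) = {Hp : p ∈ O_out^f, 𝟙ᵀp ≤ 1, Ap ∈ K*}, where P° is the polar polytope of P (whose vertices are the columns of H). -/

import Mathlib

/-!
Both `O_in^f` and `O_out^f` are circular cones around `𝟙`, with half-angles whose cosines
`√((f-1)/f)` and `1/√f` satisfy `cos² + cos² = 1`; so the two cones are each other's inner duals.
Writing `Inn = {x | 𝟙 - Hᵀx ∈ S}` with the convex cone `S = O_in + A*K`, an element `p` of the dual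
of `S` is exactly a point of `O_out` with `Ap ∈ K*`.

`Out ⊆ Inn°` is then weak duality: `1 - ⟪Hp, x⟫ ≥ ⟪p, 𝟙 - Hᵀx - A*y⟫ + ⟪Ap, y⟫ ≥ 0`.
Conversely, `Out` is compact and convex, so a point `w ∉ Out` is separated from it by some `x`
with `⟪x, Out⟫ ≤ 1 < ⟪x, w⟫`. By scaling, `⟪𝟙 - Hᵀx, p⟫ ≥ 0` for all `p ∈ S*`, so `𝟙 - Hᵀx` lies in
the closure of `S` (Farkas). Since `𝟙` is an interior point of `O_in ⊆ S`, every `t x` with `t < 1`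
lies in `Inn`, and `⟪w, t x⟫ > 1` for `t` close to `1`, so `w ∉ Inn°`.
-/

open RealInnerProductSpace

section CircularCone

variable {E : Type*} [NormedAddCommGroup E] [InnerProductSpace ℝ E]

def circularCone (u : E) (a : ℝ) : Set E := {z | a * ‖z‖ ≤ ⟪u, z⟫}

variable {u z p : E} {a b : ℝ}

lemma circularCone_smul {t : ℝ} (ht : 0 < t) (u : E) (a : ℝ) :
    circularCone (t • u) (t * a) = circularCone u a := by
  ext z
  simp only [circularCone, Set.mem_ofPred_eq, real_inner_smul_left, mul_assoc]
  exact mul_le_mul_iff_right₀ ht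

lemma isClosed_circularCone (u : E) (a : ℝ) : IsClosed (circularCone u a) :=
  isClosed_le (by fun_prop) (by fun_prop)

lemma smul_mem_circularCone {c : ℝ} (hc : 0 ≤ c) (hz : z ∈ circularCone u a) :
    c • z ∈ circularCone u a := by
  simp only [circularCone, Set.mem_ofPred_eq, norm_smul, Real.norm_of_nonneg hc,
    real_inner_smul_right, mul_left_comm a] at hz ⊢
  exact mul_le_mul_of_nonneg_left hz hc

lemma add_mem_circularCone (ha : 0 ≤ a) (hz : z ∈ circularCone u a)
    (hp : p ∈ circularCone u a) : z + p ∈ circularCone u a :=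
  calc a * ‖z + p‖ ≤ a * ‖z‖ + a * ‖p‖ := by
        rw [← mul_add]; exact mul_le_mul_of_nonneg_left (norm_add_le z p) ha
    _ ≤ ⟪u, z + p⟫ := by rw [inner_add_right]; exact add_le_add hz hp

lemma convex_circularCone (ha : 0 ≤ a) : Convex ℝ (circularCone u a) :=
  fun _ hz _ hp _ _ hs ht _ =>
    add_mem_circularCone ha (smul_mem_circularCone hs hz) (smul_mem_circularCone ht hp)

lemma mem_interior_circularCone (ha : 0 ≤ a) (hau : a < ‖u‖) :
    u ∈ interior (circularCone u a) := by
  have hopen : IsOpen {z : E | a * ‖z‖ < ⟪u, z⟫} := isOpen_lt (by fun_prop) (by fun_prop)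
  refine interior_maximal (fun z (hz : a * ‖z‖ < ⟪u, z⟫) => hz.le) hopen ?_
  show a * ‖u‖ < ⟪u, u⟫
  rw [real_inner_self_eq_norm_sq, sq]
  exact mul_lt_mul_of_pos_right hau (ha.trans_lt hau)

lemma norm_sub_inner_smul_sq (hu : ‖u‖ = 1) (z : E) :
    ‖z - ⟪u, z⟫ • u‖ ^ 2 = ‖z‖ ^ 2 - ⟪u, z⟫ ^ 2 := by
  rw [norm_sub_sq_real, real_inner_smul_right, norm_smul, Real.norm_eq_abs, hu, mul_one, sq_abs,
    real_inner_comm]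
  ring

lemma mul_norm_sub_inner_smul_le (hu : ‖u‖ = 1) (ha : 0 ≤ a) (hb : 0 ≤ b)
    (hab : a ^ 2 + b ^ 2 = 1) (hz : z ∈ circularCone u a) :
    a * ‖z - ⟪u, z⟫ • u‖ ≤ b * ⟪u, z⟫ := by
  have hζ : 0 ≤ ⟪u, z⟫ := (by positivity : 0 ≤ a * ‖z‖).trans hz
  have hsq : (a * ‖z‖) ^ 2 ≤ ⟪u, z⟫ ^ 2 := pow_le_pow_left₀ (by positivity) hz 2
  rw [← pow_le_pow_iff_left₀ (by positivity) (by positivity) two_ne_zero, mul_pow, mul_pow,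
    norm_sub_inner_smul_sq hu]
  nlinarith

lemma inner_nonneg_of_mem_circularCone (hu : ‖u‖ = 1) (ha : 0 ≤ a) (hb : 0 ≤ b)
    (hab : a ^ 2 + b ^ 2 = 1) (hz : z ∈ circularCone u a) (hp : p ∈ circularCone u b) :
    0 ≤ ⟪z, p⟫ := by
  have hz' := mul_norm_sub_inner_smul_le hu ha hb hab hz
  have hp' := mul_norm_sub_inner_smul_le hu hb ha (by linarith) hp
  have hζ : 0 ≤ ⟪u, z⟫ := (by positivity : 0 ≤ a * ‖z‖).trans hz
  have hπ : 0 ≤ ⟪u, p⟫ := (by positivity : 0 ≤ b * ‖p‖).trans hp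
  have hsplit : ⟪z, p⟫ = ⟪u, z⟫ * ⟪u, p⟫ + ⟪z - ⟪u, z⟫ • u, p - ⟪u, p⟫ • u⟫ := by
    simp only [inner_sub_left, inner_sub_right, real_inner_smul_left, real_inner_smul_right,
      real_inner_self_eq_norm_sq, hu, real_inner_comm u]
    ring
  have hcs := neg_le_of_abs_le (abs_real_inner_le_norm (z - ⟪u, z⟫ • u) (p - ⟪u, p⟫ • u))
  set Z := ‖z - ⟪u, z⟫ • u‖
  set P := ‖p - ⟪u, p⟫ • u‖
  have hZP : Z * P ≤ ⟪u, z⟫ * ⟪u, p⟫ := by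
    nlinarith [mul_le_mul_of_nonneg_left hz' (by positivity : 0 ≤ a * P),
      mul_le_mul_of_nonneg_left hp' (by positivity : 0 ≤ b * Z),
      mul_le_mul_of_nonneg_left hp' (by positivity : 0 ≤ a * ⟪u, z⟫),
      mul_le_mul_of_nonneg_left hz' (by positivity : 0 ≤ b * ⟪u, p⟫)]
  linarith

lemma mem_circularCone_of_forall_inner_nonneg (hu : ‖u‖ = 1) (ha : 0 ≤ a) (hb : 0 ≤ b)
    (hab : a ^ 2 + b ^ 2 = 1) (hp : ∀ z ∈ circularCone u a, 0 ≤ ⟪z, p⟫) :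
    p ∈ circularCone u b := by
  set p' := p - ⟪u, p⟫ • u
  set P := ‖p'‖
  have horth : ⟪u, p'⟫ = 0 := by
    simp [p', inner_sub_right, real_inner_smul_right, hu]
  have hπ : 0 ≤ ⟪u, p⟫ := hp u <| by
    simpa [circularCone, real_inner_self_eq_norm_sq, hu] using (show a ≤ 1 by nlinarith)
  -- the generatrix of the `a`-cone in the plane of `u` and `p`, on the side opposite to `p'`
  have hz : (a * P) • u - b • p' ∈ circularCone u a := by
    have hnorm : ‖(a * P) • u - b • p'‖ = P := by
      rw [← sq_eq_sq₀ (norm_nonneg _) (norm_nonneg _), norm_sub_sq_real, real_inner_smul_left,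
        real_inner_smul_right, horth, norm_smul, norm_smul, hu, Real.norm_eq_abs,
        Real.norm_eq_abs, abs_of_nonneg hb, abs_of_nonneg (by positivity)]
      linear_combination P ^ 2 * hab
    simp only [circularCone, Set.mem_ofPred_eq, hnorm, inner_sub_right, real_inner_smul_right,
      real_inner_self_eq_norm_sq, hu, horth]
    norm_num
  have hinner : ⟪(a * P) • u - b • p', p⟫ = P * (a * ⟪u, p⟫ - b * P) := by
    have hp'p : ⟪p', p⟫ = P ^ 2 := by
      have hdecomp : p = p' + ⟪u, p⟫ • u := by simp [p']
      rw [hdecomp, inner_add_right, real_inner_smul_right, real_inner_comm u, horth, mul_zero,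
        add_zero, real_inner_self_eq_norm_sq]
    rw [inner_sub_left, real_inner_smul_left, real_inner_smul_left, hp'p]
    ring
  have hbP : b * P ≤ a * ⟪u, p⟫ := by
    have := hp _ hz
    rw [hinner] at this
    nlinarith [mul_nonneg hb (norm_nonneg p'), mul_nonneg ha hπ]
  have hsplit := norm_sub_inner_smul_sq hu p
  show b * ‖p‖ ≤ ⟪u, p⟫
  rw [← pow_le_pow_iff_left₀ (by positivity) hπ two_ne_zero]
  nlinarith [pow_le_pow_left₀ (by positivity) hbP 2]

lemma innerDual_circularCone [CompleteSpace E] (hu : ‖u‖ = 1) (ha : 0 ≤ a) (hb : 0 ≤ b)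
    (hab : a ^ 2 + b ^ 2 = 1) :
    (ProperCone.innerDual (circularCone u a) : Set E) = circularCone u b := by
  ext p
  exact ⟨fun hp => mem_circularCone_of_forall_inner_nonneg hu ha hb hab fun z hz => hp hz,
    fun hp z hz => inner_nonneg_of_mem_circularCone hu ha hb hab hz hp⟩

end CircularCone

section PointedCones

variable {E : Type*} [AddCommGroup E] [Module ℝ E]

lemma Convex.add_mem_of_smul_mem {K : Set E} (hK : Convex ℝ K)
    (hsmul : ∀ c : ℝ, 0 ≤ c → ∀ y ∈ K, c • y ∈ K) {x y : E} (hx : x ∈ K) (hy : y ∈ K) :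
    x + y ∈ K := by
  have hmid := hK hx hy (by norm_num : (0 : ℝ) ≤ 1 / 2) (by norm_num : (0 : ℝ) ≤ 1 / 2)
    (by norm_num)
  simpa [smul_add, smul_smul] using hsmul 2 (by norm_num) _ hmid

lemma exists_pointedCone_coe_eq {K : Set E} (hne : K.Nonempty)
    (hadd : ∀ x ∈ K, ∀ y ∈ K, x + y ∈ K) (hsmul : ∀ c : ℝ, 0 ≤ c → ∀ y ∈ K, c • y ∈ K) :
    ∃ C : PointedCone ℝ E, (C : Set E) = K :=
  ⟨.ofConeComb K hne fun x hx y hy a ha b hb => hadd _ (hsmul a ha x hx) _ (hsmul b hb y hy),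
    rfl⟩

end PointedCones

section Duality

variable {E : Type*} [NormedAddCommGroup E] [InnerProductSpace ℝ E]

lemma PointedCone.mem_closure_of_forall_innerDual [CompleteSpace E] {C : PointedCone ℝ E} {b : E}
    (h : ∀ p ∈ ProperCone.innerDual (C : Set E), 0 ≤ ⟪b, p⟫) : b ∈ closure (C : Set E) := by
  by_contra hb
  obtain ⟨p, hp, hbp⟩ := ProperCone.hyperplane_separation' (Submodule.closure C) hb
  exact hbp.not_ge (h p fun x hx => hp x (subset_closure hx))

lemma exists_forall_inner_le_one_lt_inner [CompleteSpace E] {C : Set E} (hconv : Convex ℝ C)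
    (hclosed : IsClosed C) (h0 : (0 : E) ∈ C) {w : E} (hw : w ∉ C) :
    ∃ x : E, (∀ v ∈ C, ⟪x, v⟫ ≤ 1) ∧ 1 < ⟪x, w⟫ := by
  obtain ⟨φ, c, hlt, hcw⟩ := geometric_hahn_banach_closed_point hconv hclosed hw
  have hc : 0 < c := by simpa using hlt 0 h0
  refine ⟨c⁻¹ • (InnerProductSpace.toDual ℝ E).symm φ, fun v hv => ?_, ?_⟩
  · rw [real_inner_smul_left, InnerProductSpace.toDual_symm_apply, inv_mul_le_one₀ hc]
    exact (hlt v hv).le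
  · rw [real_inner_smul_left, InnerProductSpace.toDual_symm_apply, lt_inv_mul_iff₀ hc, mul_one]
    exact hcw

def polar (C : Set E) : Set E := {w | ∀ x ∈ C, ⟪w, x⟫ ≤ 1}

end Duality

local notation "𝔼" n:arg => EuclideanSpace ℝ (Fin n)

section SecondOrderCones

variable {f : ℕ}

def allOnes (f : ℕ) : 𝔼 f := WithLp.toLp 2 fun _ => 1

lemma inner_allOnes_left (z : 𝔼 f) : ⟪allOnes f, z⟫ = ∑ i, z i := by
  simp [allOnes, PiLp.inner_apply]

lemma norm_allOnes : ‖allOnes f‖ = √f := by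
  simp [EuclideanSpace.norm_eq, allOnes]

def socIn (f : ℕ) : Set (𝔼 f) := {z | √((f : ℝ) - 1) * ‖z‖ ≤ ∑ i, z i}

def socOut (f : ℕ) : Set (𝔼 f) := {p | ‖p‖ ≤ ∑ i, p i}

lemma socIn_eq_circularCone : socIn f = circularCone (allOnes f) √((f : ℝ) - 1) := by
  ext z; simp [socIn, circularCone, inner_allOnes_left]

lemma socOut_eq_circularCone : socOut f = circularCone (allOnes f) 1 := by
  ext p; simp [socOut, circularCone, inner_allOnes_left]

theorem innerDual_socIn (f : ℕ) : (ProperCone.innerDual (socIn f) : Set (𝔼 f)) = socOut f := by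
  rcases Nat.eq_zero_or_pos f with rfl | hf
  · ext p; simp [Subsingleton.elim p 0, socOut]
  have hf' : (1 : ℝ) ≤ f := by exact_mod_cast hf
  have ht : 0 < (√f)⁻¹ := by positivity
  have hu : ‖(√f)⁻¹ • allOnes f‖ = 1 := by
    rw [norm_smul, norm_allOnes, Real.norm_of_nonneg ht.le, inv_mul_cancel₀ (by positivity)]
  rw [socIn_eq_circularCone, socOut_eq_circularCone, ← circularCone_smul ht _ √((f : ℝ) - 1),
    ← circularCone_smul ht _ 1]
  refine innerDual_circularCone hu (by positivity) (by positivity) ?_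
  rw [mul_pow, mul_pow, inv_pow, Real.sq_sqrt (by linarith), Real.sq_sqrt (by linarith)]
  field_simp
  ring

lemma allOnes_mem_interior_socIn : allOnes f ∈ interior (socIn f) := by
  rcases Nat.eq_zero_or_pos f with rfl | hf
  · simp [socIn, Real.sqrt_eq_zero_of_nonpos]
  have hf' : (1 : ℝ) ≤ f := by exact_mod_cast hf
  rw [socIn_eq_circularCone]
  refine mem_interior_circularCone (by positivity) ?_
  rw [norm_allOnes]
  exact Real.sqrt_lt_sqrt (by linarith) (by linarith)

lemma exists_pointedCone_coe_eq_socIn (f : ℕ) :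
    ∃ C : PointedCone ℝ (𝔼 f), (C : Set (𝔼 f)) = socIn f := by
  rw [socIn_eq_circularCone]
  exact exists_pointedCone_coe_eq ⟨0, by simp [circularCone]⟩
    (fun _ hx _ hy => add_mem_circularCone (by positivity) hx hy)
    (fun _ hc _ hy => smul_mem_circularCone hc hy)

end SecondOrderCones

section Approximations

-- `h i` are the columns of `H`: `linComb h p = H p`, `slack h x = 𝟙 - Hᵀ x`,
-- `inn = Inn_P(A)`, `out = Out_{P°}(A)`.
variable {n f m : ℕ} (h : Fin f → 𝔼 n) (K : Set (𝔼 m)) (A : 𝔼 f →L[ℝ] 𝔼 m)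

noncomputable def slack (x : 𝔼 n) : 𝔼 f := WithLp.toLp 2 fun i => 1 - ⟪h i, x⟫

def inn : Set (𝔼 n) := {x | ∃ y ∈ K, slack h x - ContinuousLinearMap.adjoint A y ∈ socIn f}

def out : Set (𝔼 n) :=
  {w | ∃ p : 𝔼 f, p ∈ socOut f ∧ (∑ i, p i) ≤ 1 ∧ A p ∈ {u | ∀ y ∈ K, 0 ≤ ⟪u, y⟫} ∧
    w = ∑ i, p i • h i}

def outWeights : Set (𝔼 f) :=
  socOut f ∩ {p | ⟪allOnes f, p⟫ ≤ 1} ∩ A ⁻¹' ProperCone.innerDual K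

noncomputable def linComb : 𝔼 f →L[ℝ] 𝔼 n :=
  LinearMap.toContinuousLinearMap
    (Fintype.linearCombination ℝ h ∘ₗ (WithLp.linearEquiv 2 ℝ (Fin f → ℝ)).toLinearMap)

variable {h K A}

lemma linComb_apply (p : 𝔼 f) : linComb h p = ∑ i, p i • h i := by
  simp [linComb, Fintype.linearCombination_apply]

lemma inner_slack (x : 𝔼 n) (p : 𝔼 f) : ⟪slack h x, p⟫ = ∑ i, p i - ⟪linComb h p, x⟫ := by
  rw [linComb_apply, sum_inner, ← Finset.sum_sub_distrib, PiLp.inner_apply]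
  refine Finset.sum_congr rfl fun i _ => ?_
  simp [slack, real_inner_smul_left]
  ring

lemma slack_smul (t : ℝ) (x : 𝔼 n) : slack h (t • x) = (1 - t) • allOnes f + t • slack h x := by
  ext i; simp [slack, allOnes, real_inner_smul_right]; ring

lemma out_eq_image : out h K A = linComb h '' outWeights K A := by
  ext w
  simp [out, outWeights, linComb_apply, inner_allOnes_left, real_inner_comm _ (A _), eq_comm,
    and_assoc]

lemma isCompact_outWeights : IsCompact (outWeights K A) := by
  refine (isCompact_closedBall (0 : 𝔼 f) 1).of_isClosed_subset ?_ fun p hp => ?_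
  · exact ((socOut_eq_circularCone ▸ isClosed_circularCone _ _).inter
      (isClosed_le (by fun_prop) continuous_const)).inter
      ((ProperCone.isClosed _).preimage A.continuous)
  · obtain ⟨⟨hp, hp1 : ⟪allOnes f, p⟫ ≤ 1⟩, -⟩ := hp
    rw [inner_allOnes_left] at hp1
    simpa using hp.trans hp1

lemma convex_outWeights : Convex ℝ (outWeights K A) :=
  ((socOut_eq_circularCone ▸ convex_circularCone zero_le_one).inter
    ((convex_Iic 1).linear_preimage (innerₛₗ ℝ (allOnes f)))).inter
    ((ProperCone.convex _).linear_preimage A.toLinearMap)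

lemma zero_mem_outWeights : 0 ∈ outWeights K A := by
  simp [outWeights, socOut]

theorem out_subset_polar_inn : out h K A ⊆ polar (inn h K A) := by
  rw [out_eq_image]
  rintro _ ⟨p, ⟨⟨hp, hp1 : ⟪allOnes f, p⟫ ≤ 1⟩, hAp⟩, rfl⟩ x ⟨y, hy, hz⟩
  have hp' : p ∈ (ProperCone.innerDual (socIn f) : Set (𝔼 f)) := by rwa [innerDual_socIn]
  have hzp : 0 ≤ ⟪slack h x - ContinuousLinearMap.adjoint A y, p⟫ := hp' hz
  rw [inner_sub_left, inner_slack, ContinuousLinearMap.adjoint_inner_left] at hzp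
  have hyp : 0 ≤ ⟪y, A p⟫ := hAp hy
  rw [inner_allOnes_left] at hp1
  show ⟪linComb h p, x⟫ ≤ 1
  linarith

lemma inner_slack_nonneg {x : 𝔼 n} (hx : ∀ w ∈ out h K A, ⟪x, w⟫ ≤ 1) {p : 𝔼 f}
    (hp : p ∈ socOut f) (hAp : A p ∈ ProperCone.innerDual K) : 0 ≤ ⟪slack h x, p⟫ := by
  rw [inner_slack, sub_nonneg]
  rcases ((norm_nonneg p).trans hp).eq_or_lt with hs | hs
  · obtain rfl : p = 0 := norm_le_zero_iff.1 (hs ▸ hp)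
    simp
  have hq : (∑ i, p i)⁻¹ • p ∈ outWeights K A := by
    refine ⟨⟨?_, ?_⟩, ?_⟩
    · rw [socOut_eq_circularCone] at hp ⊢
      exact smul_mem_circularCone (by positivity) hp
    · show ⟪allOnes f, _⟫ ≤ 1
      rw [real_inner_smul_right, inner_allOnes_left, inv_mul_cancel₀ hs.ne']
    · rw [Set.mem_preimage, map_smul]
      exact ProperCone.smul_mem _ hAp (by positivity)
  have hxq := hx _ (by rw [out_eq_image]; exact ⟨_, hq, rfl⟩)
  rwa [map_smul, real_inner_smul_right, real_inner_comm, inv_mul_le_iff₀ hs, mul_one] at hxq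

theorem smul_mem_inn (K : PointedCone ℝ (𝔼 m)) {x : 𝔼 n} (hx : ∀ w ∈ out h K A, ⟪x, w⟫ ≤ 1)
    {t : ℝ} (ht0 : 0 ≤ t) (ht1 : t < 1) : t • x ∈ inn h K A := by
  obtain ⟨Cin, hCin⟩ := exists_pointedCone_coe_eq_socIn f
  set S := Cin ⊔ K.map (ContinuousLinearMap.adjoint A : 𝔼 m →ₗ[ℝ] 𝔼 f)
  have hCS : (Cin : Set (𝔼 f)) ⊆ S := SetLike.coe_subset_coe.2 le_sup_left
  have hslack : slack h x ∈ closure (S : Set (𝔼 f)) := by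
    refine PointedCone.mem_closure_of_forall_innerDual fun p hp => inner_slack_nonneg hx ?_ ?_
    · rw [← innerDual_socIn, ← hCin]
      exact fun z hz => hp (hCS hz)
    · intro y hy
      have hyS : ContinuousLinearMap.adjoint A y ∈ S :=
        le_sup_right (a := Cin) (PointedCone.mem_map.2 ⟨y, hy, rfl⟩)
      simpa [ContinuousLinearMap.adjoint_inner_left] using hp hyS
  have hone : allOnes f ∈ interior (S : Set (𝔼 f)) :=
    interior_mono hCS (hCin ▸ allOnes_mem_interior_socIn)
  have hmem : slack h (t • x) ∈ S := by
    rw [slack_smul]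
    exact interior_subset (S.convex.combo_interior_closure_mem_interior hone hslack
      (by linarith) ht0 (by ring))
  obtain ⟨z, hz, _, hv, hzv⟩ := Submodule.mem_sup.1 hmem
  obtain ⟨y, hy, rfl⟩ := PointedCone.mem_map.1 hv
  refine ⟨y, hy, ?_⟩
  rw [← hzv, ← hCin]
  simpa using hz

theorem polar_inn_subset_out (K : PointedCone ℝ (𝔼 m)) : polar (inn h K A) ⊆ out h K A := by
  intro w hw
  by_contra hwo
  have hcomp : IsCompact (out h K A) :=
    out_eq_image ▸ isCompact_outWeights.image (linComb h).continuous
  have hconv : Convex ℝ (out h K A) :=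
    out_eq_image ▸ convex_outWeights.linear_image (linComb h).toLinearMap
  have h0 : 0 ∈ out h K A := out_eq_image ▸ ⟨0, zero_mem_outWeights, map_zero _⟩
  obtain ⟨x, hx, hxw⟩ := exists_forall_inner_le_one_lt_inner hconv hcomp.isClosed h0 hwo
  obtain ⟨t, ht, ht1⟩ := exists_between (inv_lt_one_of_one_lt₀ hxw)
  have htw := hw _ (smul_mem_inn K hx ((inv_pos.2 (one_pos.trans hxw)).le.trans ht.le) ht1)
  rw [real_inner_smul_right, real_inner_comm] at htw
  rw [inv_lt_iff_one_lt_mul₀ (one_pos.trans hxw)] at ht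
  linarith

end Approximations

theorem polar_of_inn_general (n f m : ℕ)
    (h : Fin f → EuclideanSpace ℝ (Fin n))
    (K : Set (EuclideanSpace ℝ (Fin m)))
    (hKconv : Convex ℝ K)
    (hKcone : ∀ c : ℝ, 0 ≤ c → ∀ y ∈ K, c • y ∈ K)
    (A : EuclideanSpace ℝ (Fin f) →L[ℝ] EuclideanSpace ℝ (Fin m))
    (hInnInt : (interior {x : EuclideanSpace ℝ (Fin n) | ∃ y ∈ K,
        (WithLp.toLp 2 (fun i => 1 - ⟪h i, x⟫ - (ContinuousLinearMap.adjoint A y) i) :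
          EuclideanSpace ℝ (Fin f)) ∈
        {z : EuclideanSpace ℝ (Fin f) | Real.sqrt ((f : ℝ) - 1) * ‖z‖ ≤ ∑ i, z i}}).Nonempty) :
    {w : EuclideanSpace ℝ (Fin n) | ∀ x ∈
        {x : EuclideanSpace ℝ (Fin n) | ∃ y ∈ K,
          (WithLp.toLp 2 (fun i => 1 - ⟪h i, x⟫ - (ContinuousLinearMap.adjoint A y) i) :
            EuclideanSpace ℝ (Fin f)) ∈
          {z : EuclideanSpace ℝ (Fin f) | Real.sqrt ((f : ℝ) - 1) * ‖z‖ ≤ ∑ i, z i}},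
        ⟪w, x⟫ ≤ 1} =
    {w : EuclideanSpace ℝ (Fin n) | ∃ p : EuclideanSpace ℝ (Fin f),
        ‖p‖ ≤ ∑ i, p i ∧ (∑ i, p i) ≤ 1 ∧
        A p ∈ {u : EuclideanSpace ℝ (Fin m) | ∀ y ∈ K, 0 ≤ ⟪u, y⟫} ∧
        w = ∑ i, p i • h i} := by
  obtain ⟨_, y₀, hy₀, -⟩ := hInnInt.mono interior_subset
  obtain ⟨K, rfl⟩ := exists_pointedCone_coe_eq ⟨y₀, hy₀⟩
    (fun _ hx _ hy => hKconv.add_mem_of_smul_mem hKcone hx hy) hKcone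
  show polar (inn h K A) = out h K A
  exact (polar_inn_subset_out K).antisymm out_subset_polar_inn

theorem polar_of_inn (n f m : ℕ)
    (h : Fin f → EuclideanSpace ℝ (Fin n))
    (hP0 : (0 : EuclideanSpace ℝ (Fin n)) ∈
      interior {x : EuclideanSpace ℝ (Fin n) | ∀ i, ⟪h i, x⟫ ≤ 1})
    (K : Set (EuclideanSpace ℝ (Fin m)))
    (hKclosed : IsClosed K) (hKconv : Convex ℝ K)
    (hKcone : ∀ c : ℝ, 0 ≤ c → ∀ y ∈ K, c • y ∈ K)
    (A : EuclideanSpace ℝ (Fin f) →L[ℝ] EuclideanSpace ℝ (Fin m))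
    (hA : ∀ i : Fin f, A (EuclideanSpace.single i 1) ∈
      {w : EuclideanSpace ℝ (Fin m) | ∀ y ∈ K, 0 ≤ ⟪w, y⟫})
    (hInnClosed : IsClosed {x : EuclideanSpace ℝ (Fin n) | ∃ y ∈ K,
        (WithLp.toLp 2 (fun i => 1 - ⟪h i, x⟫ - (ContinuousLinearMap.adjoint A y) i) :
          EuclideanSpace ℝ (Fin f)) ∈
        {z : EuclideanSpace ℝ (Fin f) | Real.sqrt ((f : ℝ) - 1) * ‖z‖ ≤ ∑ i, z i}})
    (hInnInt : (interior {x : EuclideanSpace ℝ (Fin n) | ∃ y ∈ K,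
        (WithLp.toLp 2 (fun i => 1 - ⟪h i, x⟫ - (ContinuousLinearMap.adjoint A y) i) :
          EuclideanSpace ℝ (Fin f)) ∈
        {z : EuclideanSpace ℝ (Fin f) | Real.sqrt ((f : ℝ) - 1) * ‖z‖ ≤ ∑ i, z i}}).Nonempty) :
    {w : EuclideanSpace ℝ (Fin n) | ∀ x ∈
        {x : EuclideanSpace ℝ (Fin n) | ∃ y ∈ K,
          (WithLp.toLp 2 (fun i => 1 - ⟪h i, x⟫ - (ContinuousLinearMap.adjoint A y) i) :
            EuclideanSpace ℝ (Fin f)) ∈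
          {z : EuclideanSpace ℝ (Fin f) | Real.sqrt ((f : ℝ) - 1) * ‖z‖ ≤ ∑ i, z i}},
        ⟪w, x⟫ ≤ 1} =
    {w : EuclideanSpace ℝ (Fin n) | ∃ p : EuclideanSpace ℝ (Fin f),
        ‖p‖ ≤ ∑ i, p i ∧ (∑ i, p i) ≤ 1 ∧
        A p ∈ {u : EuclideanSpace ℝ (Fin m) | ∀ y ∈ K, 0 ≤ ⟪u, y⟫} ∧
        w = ∑ i, p i • h i} :=
  polar_of_inn_general n f m h K hKconv hKcone A hInnInt
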